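/- arXiv:2405.12868 — 2 statements merged into one kernel-verified Lean document; each statement's English description precedes it below -/
import Mathlib

section
/- The frequency cross-correlation features of ESTAG are E(3)-invariant: let T, N be positive integers, x : Fin T → Fin N → ℝ³ be node positions, w : Fin N → Fin T → ℝ be fixed per-node spectral weights, and define f_i(k) = Σ_{t=0}^{T-1} exp(-i' · 2πkt/T) • (x_i(t) - x̄(t)) ∈ ℂ³ and A_{ij}(k) = w_i(k) · w_j(k) · |⟨f_i(k), f_j(k)⟩|, where ⟨·,·⟩ is the Hermitian inner product on ℂ³. Then for every real orthogonal 3×3 matrix O and every b ∈ ℝ³, the quantity A_{ij}(k) computed from the transformed positions t ↦ (i ↦ O · x_i(t) + b) equals A_{ij}(k) computed from x, for all i, j, k. -/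
open scoped BigOperators

/-- Componentwise coercion of a real 3-vector into a complex 3-vector. -/
noncomputable def complexify (v : EuclideanSpace ℝ (Fin 3)) : EuclideanSpace ℂ (Fin 3) :=
  WithLp.toLp 2 (fun a => (v a : ℂ))

/-- Mean position of the `N` nodes at frame `t`. -/
noncomputable def meanPos {T N : ℕ} (x : Fin T → Fin N → EuclideanSpace ℝ (Fin 3))
    (t : Fin T) : EuclideanSpace ℝ (Fin 3) :=
  (N : ℝ)⁻¹ • ∑ j : Fin N, x t j

/-- Equivariant Discrete Fourier Transform:
`f_i(k) = ∑_{t=0}^{T-1} exp(-i' · 2πkt/T) • (x_i(t) - x̄(t)) ∈ ℂ³`. -/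
noncomputable def edft {T N : ℕ} (x : Fin T → Fin N → EuclideanSpace ℝ (Fin 3))
    (i : Fin N) (k : Fin T) : EuclideanSpace ℂ (Fin 3) :=
  ∑ t : Fin T,
    Complex.exp (-Complex.I * (2 * (Real.pi : ℂ) * (k.val : ℂ) * (t.val : ℂ) / (T : ℂ))) •
      complexify (x t i - meanPos x t)

/-- The E(3) action `x ↦ O·x + b` on 3-vectors. -/
noncomputable def e3Act (O : Matrix (Fin 3) (Fin 3) ℝ) (b : EuclideanSpace ℝ (Fin 3))
    (v : EuclideanSpace ℝ (Fin 3)) : EuclideanSpace ℝ (Fin 3) :=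
  (show EuclideanSpace ℝ (Fin 3) from WithLp.toLp 2 (O.mulVec v)) + b

/-- Frequency cross-correlation `A_{ij}(k) = w_i(k) w_j(k) |⟨f_i(k), f_j(k)⟩|`. -/
noncomputable def crossCorr {T N : ℕ} (w : Fin N → Fin T → ℝ)
    (x : Fin T → Fin N → EuclideanSpace ℝ (Fin 3)) (i j : Fin N) (k : Fin T) : ℝ :=
  w i k * w j k * ‖(inner ℂ (edft x i k) (edft x j k) : ℂ)‖

/-- Frequency amplitude `c_i(k) = w_i(k) ‖f_i(k)‖²`. -/
noncomputable def amplitude {T N : ℕ} (w : Fin N → Fin T → ℝ)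
    (x : Fin T → Fin N → EuclideanSpace ℝ (Fin 3)) (i : Fin N) (k : Fin T) : ℝ :=
  w i k * ‖edft x i k‖ ^ 2


/-!
Centering at the mean removes the translation `b`, because the mean of `O xᵢ + b` is `O x̄ + b`.
The EDFT is linear in the centered positions, so it turns `fᵢ(k)` into `O fᵢ(k)`, with `O`
acting on `ℂ³` through its complexification. A real orthogonal matrix is unitary over `ℂ`, hence
preserves the Hermitian inner product `⟨fᵢ(k), fⱼ(k)⟩`.
-/

open Matrix

theorem Matrix.map_ofReal_mem_unitaryGroup {n : Type*} [Fintype n] [DecidableEq n]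
    {O : Matrix n n ℝ} (hO : O ∈ orthogonalGroup n ℝ) :
    O.map ((↑) : ℝ → ℂ) ∈ unitaryGroup n ℂ := by
  have hstar : star (O.map ((↑) : ℝ → ℂ)) = (star O).map Complex.ofRealHom := by
    ext a c
    simp
  rw [mem_unitaryGroup_iff', hstar]
  change _ * O.map Complex.ofRealHom = 1
  rw [← Matrix.map_mul, hO.1, Matrix.map_one _ (map_zero _) (map_one _)]

theorem Matrix.inner_toEuclideanLin_of_mem_unitaryGroup {𝕜 n : Type*} [RCLike 𝕜] [Fintype n]
    [DecidableEq n] {U : Matrix n n 𝕜} (hU : U ∈ unitaryGroup n 𝕜) (x y : EuclideanSpace 𝕜 n) :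
    inner 𝕜 (toEuclideanLin U x) (toEuclideanLin U y) = inner 𝕜 x y := by
  simp only [EuclideanSpace.inner_eq_star_dotProduct, toLpLin_apply, star_mulVec]
  rw [dotProduct_comm, ← dotProduct_mulVec, mulVec_mulVec, ← star_eq_conjTranspose, hU.1,
    one_mulVec, dotProduct_comm]

theorem e3Act_eq (O : Matrix (Fin 3) (Fin 3) ℝ) (b v : EuclideanSpace ℝ (Fin 3)) :
    e3Act O b v = toEuclideanLin O v + b :=
  rfl

theorem meanPos_map_add {T N : ℕ} (hN : N ≠ 0) (x : Fin T → Fin N → EuclideanSpace ℝ (Fin 3))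
    (L : EuclideanSpace ℝ (Fin 3) →ₗ[ℝ] EuclideanSpace ℝ (Fin 3)) (b : EuclideanSpace ℝ (Fin 3))
    (t : Fin T) :
    meanPos (fun t l => L (x t l) + b) t = L (meanPos x t) + b := by
  have hN' : (N : ℝ) ≠ 0 := Nat.cast_ne_zero.2 hN
  simp only [meanPos, Finset.sum_add_distrib, Finset.sum_const, Finset.card_univ,
    Fintype.card_fin, ← Nat.cast_smul_eq_nsmul ℝ, smul_add, smul_smul, inv_mul_cancel₀ hN',
    one_smul, map_smul, map_sum]

theorem complexify_toEuclideanLin (O : Matrix (Fin 3) (Fin 3) ℝ) (v : EuclideanSpace ℝ (Fin 3)) :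
    complexify (toEuclideanLin O v) = toEuclideanLin (O.map (↑)) (complexify v) := by
  ext a
  simp [complexify, toLpLin_apply, mulVec, dotProduct]

theorem edft_e3Act {T N : ℕ} (hN : N ≠ 0) (x : Fin T → Fin N → EuclideanSpace ℝ (Fin 3))
    (O : Matrix (Fin 3) (Fin 3) ℝ) (b : EuclideanSpace ℝ (Fin 3)) (i : Fin N) (k : Fin T) :
    edft (fun t l => e3Act O b (x t l)) i k = toEuclideanLin (O.map (↑)) (edft x i k) := by
  simp only [edft, e3Act_eq, meanPos_map_add hN, add_sub_add_right_eq_sub, ← map_sub,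
    complexify_toEuclideanLin, map_sum, map_smul]

theorem crossCorr_E3_invariant_general (T N : ℕ) (hN : 0 < N)
    (x : Fin T → Fin N → EuclideanSpace ℝ (Fin 3)) (w : Fin N → Fin T → ℝ)
    (O : Matrix (Fin 3) (Fin 3) ℝ) (hO : O ∈ Matrix.orthogonalGroup (Fin 3) ℝ)
    (b : EuclideanSpace ℝ (Fin 3)) :
    ∀ (i j : Fin N) (k : Fin T),
      crossCorr w (fun t l => e3Act O b (x t l)) i j k = crossCorr w x i j k := by
  intro i j k
  rw [crossCorr, crossCorr, edft_e3Act hN.ne', edft_e3Act hN.ne',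
    inner_toEuclideanLin_of_mem_unitaryGroup (map_ofReal_mem_unitaryGroup hO)]

/-- The frequency cross-correlation features of ESTAG are E(3)-invariant:
computing `A_{ij}(k)` from the transformed positions `t ↦ (i ↦ O·x_i(t) + b)` gives the
same value as computing it from `x`, for all `i`, `j`, `k`. -/
theorem crossCorr_E3_invariant (T N : ℕ) (hT : 0 < T) (hN : 0 < N)
    (x : Fin T → Fin N → EuclideanSpace ℝ (Fin 3)) (w : Fin N → Fin T → ℝ)
    (O : Matrix (Fin 3) (Fin 3) ℝ) (hO : O ∈ Matrix.orthogonalGroup (Fin 3) ℝ)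
    (b : EuclideanSpace ℝ (Fin 3)) :
    ∀ (i j : Fin N) (k : Fin T),
      crossCorr w (fun t l => e3Act O b (x t l)) i j k = crossCorr w x i j k :=
  crossCorr_E3_invariant_general T N hN x w O hO b
end

section
/- The multi-channel Equivariant Spatial Module position update is equivariant under the channel-wise E(3) action: let N, m be positive integers, 𝒩 : Fin N → Finset (Fin N) assign each node a nonempty neighborhood, and for each pair (i,j) let the scalar coefficient s_{ij} be an arbitrary function of the Gram matrix (Z_i - Z_j)ᵀ(Z_i - Z_j), i.e. s_{ij}(Z) = ψ_{ij}((Z_i - Z_j)ᵀ(Z_i - Z_j)) for arbitrary functions ψ_{ij} : Matrix (Fin m) (Fin m) ℝ → ℝ. For multi-channel coordinates Z : Fin N → Matrix (Fin 3) (Fin m) ℝ, define the update Z'_i = Z_i + (1/|𝒩(i)|) Σ_{j ∈ 𝒩(i)} (Z_i - Z_j) · s_{ij}(Z). Then for every real orthogonal 3×3 matrix O and every b ∈ ℝ³, applying the update to the transformed coordinates i ↦ O·Z_i + b·𝟙ᵀ (adding b to each column) yields output O·Z'_i + b·𝟙ᵀ for every node i. -/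
open Matrix
open scoped BigOperators

/-- The translation part `b·𝟙ᵀ` of the channel-wise E(3) action: the 3×m matrix whose
every column is `b`. -/
def colTrans (m : ℕ) (b : Fin 3 → ℝ) : Matrix (Fin 3) (Fin m) ℝ :=
  Matrix.of fun a _ => b a

/-- Multi-channel ESM position update
`Z'_i = Z_i + (1/|𝒩(i)|) Σ_{j ∈ 𝒩(i)} (Z_i - Z_j) · ψ_{ij}((Z_i - Z_j)ᵀ(Z_i - Z_j))`. -/
noncomputable def mcEsmPos {N m : ℕ} (𝒩 : Fin N → Finset (Fin N))
    (ψ : Fin N → Fin N → Matrix (Fin m) (Fin m) ℝ → ℝ)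
    (Z : Fin N → Matrix (Fin 3) (Fin m) ℝ) (i : Fin N) : Matrix (Fin 3) (Fin m) ℝ :=
  Z i + ((𝒩 i).card : ℝ)⁻¹ •
    ∑ j ∈ 𝒩 i, ψ i j ((Z i - Z j)ᵀ * (Z i - Z j)) • (Z i - Z j)

/-- The multi-channel ESM position update is equivariant under the
channel-wise E(3) action `Z ↦ O·Z + b·𝟙ᵀ`: applying the update to the transformed
coordinates yields `O·Z'_i + b·𝟙ᵀ` for every node `i`. -/
theorem mcEsmPos_E3_equivariant (N m : ℕ) (hN : 0 < N) (hm : 0 < m)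
    (𝒩 : Fin N → Finset (Fin N)) (h𝒩 : ∀ i, (𝒩 i).Nonempty)
    (ψ : Fin N → Fin N → Matrix (Fin m) (Fin m) ℝ → ℝ)
    (Z : Fin N → Matrix (Fin 3) (Fin m) ℝ)
    (O : Matrix (Fin 3) (Fin 3) ℝ) (hO : O ∈ Matrix.orthogonalGroup (Fin 3) ℝ)
    (b : Fin 3 → ℝ) :
    ∀ i, mcEsmPos 𝒩 ψ (fun j => O * Z j + colTrans m b) i =
      O * mcEsmPos 𝒩 ψ Z i + colTrans m b := by

  intro i
  have hOt : Oᵀ * O = 1 := (Matrix.mem_orthogonalGroup_iff' _ _).mp hO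
  have hdiff : ∀ j, (O * Z i + colTrans m b) - (O * Z j + colTrans m b)
      = O * (Z i - Z j) := by
    intro j
    rw [Matrix.mul_sub]; abel
  have hgram : ∀ j, ((O * (Z i - Z j))ᵀ * (O * (Z i - Z j)))
      = (Z i - Z j)ᵀ * (Z i - Z j) := by
    intro j
    rw [Matrix.transpose_mul, Matrix.mul_assoc, ← Matrix.mul_assoc Oᵀ O, hOt,
      Matrix.one_mul]
  simp only [mcEsmPos, hdiff, hgram]
  rw [Matrix.mul_add, Matrix.mul_smul, Matrix.mul_sum]
  simp only [Matrix.mul_smul, Matrix.mul_sub]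
  abel
end
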